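/- Assume r ≥ 2 and the positivity hypothesis. Then H(ℓ) = (Fin r → ℕ) if and only if H(ℓ) can be generated by r elements as an additive monoid and, for every index i, Σ_{j ≠ i} ℓ_j ≥ 0 (i.e. the vector Σ_{j ≠ i} e_j lies in H(ℓ)). -/
import Mathlib


/-- The additive submonoid `H(ℓ) = {a : Fin r → ℕ | ∑ i, a i • ℓ i ≥ 0}`. -/
def Hmono (r : ℕ) (ℓ : Fin r → ℤ) : AddSubmonoid (Fin r → ℕ) where
  carrier := {a | 0 ≤ ∑ i, (a i : ℤ) * ℓ i}
  zero_mem' := by simp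
  add_mem' := by
    intro a b ha hb
    simp only [Set.mem_setOf_eq, Pi.add_apply] at *
    have h : ∑ i, ((a i + b i : ℕ) : ℤ) * ℓ i
        = (∑ i, (a i : ℤ) * ℓ i) + ∑ i, (b i : ℤ) * ℓ i := by
      rw [← Finset.sum_add_distrib]
      apply Finset.sum_congr rfl
      intro i _
      push_cast
      ring
    rw [h]
    exact add_nonneg ha hb

section Helpers

variable {r : ℕ} {ℓ : Fin r → ℤ}

lemma mem_Hmono {a : Fin r → ℕ} : a ∈ Hmono r ℓ ↔ 0 ≤ ∑ i, (a i : ℤ) * ℓ i := Iff.rfl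

lemma sum_single_mul (k : Fin r) (m : ℕ) :
    ∑ i, ((Pi.single k m : Fin r → ℕ) i : ℤ) * ℓ i = (m : ℤ) * ℓ k := by
  rw [Finset.sum_eq_single k]
  · simp
  · intro b _ hb; simp [Pi.single_eq_of_ne hb]
  · simp

lemma single_one_injective :
    Function.Injective (fun i => (Pi.single i 1 : Fin r → ℕ)) := by
  intro i j h
  by_contra hne
  have := congrFun h i
  simp [Pi.single_eq_of_ne hne] at this

lemma sum_eq_pair (c : Fin r → ℕ) (i j : Fin r) (hij : i ≠ j)
    (h0 : ∀ k, k ≠ i → k ≠ j → c k = 0) :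
    ∑ k, (c k : ℤ) * ℓ k = (c i : ℤ) * ℓ i + (c j : ℤ) * ℓ j := by
  have hz : ∀ x ∈ Finset.univ, x ∉ ({i, j} : Finset (Fin r)) → (c x : ℤ) * ℓ x = 0 := by
    intro x _ hx
    simp only [Finset.mem_insert, Finset.mem_singleton, not_or] at hx
    rw [h0 x hx.1 hx.2]
    simp
  rw [← Finset.sum_subset (Finset.subset_univ {i, j}) hz, Finset.sum_pair hij]

lemma mem_S_of_irreducible (S : Finset (Fin r → ℕ))
    (hS : AddSubmonoid.closure (S : Set (Fin r → ℕ)) = Hmono r ℓ)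
    (x : Fin r → ℕ) (hx : x ∈ Hmono r ℓ) (hx0 : x ≠ 0)
    (hirr : ∀ a b : Fin r → ℕ, a ∈ Hmono r ℓ → b ∈ Hmono r ℓ → x = a + b →
      a = 0 ∨ b = 0) :
    x ∈ S := by
  have hxc : x ∈ AddSubmonoid.closure (S : Set (Fin r → ℕ)) := hS ▸ hx
  have hSH : ∀ y ∈ S, y ∈ Hmono r ℓ := fun y hy =>
    hS ▸ AddSubmonoid.subset_closure hy
  obtain ⟨m, hm, hsum⟩ := AddSubmonoid.exists_multiset_of_mem_closure hxc
  clear hxc hS hx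
  induction m using Multiset.induction generalizing x with
  | empty =>
    simp at hsum
    exact absurd hsum.symm hx0
  | cons a t ih =>
    have haS : a ∈ S := hm a (Multiset.mem_cons_self a t)
    have htS : ∀ y ∈ t, y ∈ S := fun y hy => hm y (Multiset.mem_cons_of_mem hy)
    have htH : t.sum ∈ Hmono r ℓ :=
      AddSubmonoid.multiset_sum_mem _ t (fun y hy => hSH y (htS y hy))
    have hsum' : x = a + t.sum := by rw [← hsum, Multiset.sum_cons]
    rcases hirr a t.sum (hSH a haS) htH hsum' with h0 | h0
    · have : t.sum = x := by rw [hsum', h0, zero_add]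
      exact ih x hx0 hirr htS this
    · rw [hsum', h0, add_zero]
      exact haS

lemma single_irreducible (i : Fin r) (a b : Fin r → ℕ)
    (hab : (Pi.single i 1 : Fin r → ℕ) = a + b) : a = 0 ∨ b = 0 := by
  have hk0 : ∀ k, k ≠ i → a k = 0 ∧ b k = 0 := by
    intro k hk
    have := congrFun hab k
    simp [Pi.single_eq_of_ne hk] at this
    omega
  have h1 : a i + b i = 1 := by
    have := congrFun hab i
    simpa using this.symm
  rcases (by omega : a i = 0 ∨ b i = 0) with h | h
  · left; funext k
    by_cases hk : k = i
    · subst hk; exact h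
    · exact (hk0 k hk).1
  · right; funext k
    by_cases hk : k = i
    · subst hk; exact h
    · exact (hk0 k hk).2

end Helpers

/-- Artin's conjecture at `s₀` holds iff the toric ideal is zero and, for every `i`,
`∑_{j ≠ i} ℓ j ≥ 0`, i.e. `∑_{j ≠ i} e_j ∈ H(ℓ)`. -/
theorem stmt9 (r : ℕ) (hr : 2 ≤ r) (ℓ : Fin r → ℤ)
    (hpos : (∃ j, ℓ j < 0) → ∃ i, 0 < ℓ i) :
    (Hmono r ℓ = ⊤) ↔
      ((∃ S : Finset (Fin r → ℕ), S.card = r ∧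
          AddSubmonoid.closure (S : Set (Fin r → ℕ)) = Hmono r ℓ) ∧
        ∀ i, 0 ≤ ∑ j ∈ Finset.univ.erase i, ℓ j) := by
  constructor
  · intro htop
    have hl : ∀ k, 0 ≤ ℓ k := by
      intro k
      have hmem : (Pi.single k 1 : Fin r → ℕ) ∈ Hmono r ℓ := by
        rw [htop]; exact AddSubmonoid.mem_top _
      rw [mem_Hmono, sum_single_mul] at hmem
      simpa using hmem
    refine ⟨⟨(Finset.univ : Finset (Fin r)).image
        (fun i => (Pi.single i 1 : Fin r → ℕ)), ?_, ?_⟩, ?_⟩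
    · rw [Finset.card_image_of_injective _ single_one_injective, Finset.card_univ,
        Fintype.card_fin]
    · rw [htop]
      rw [AddSubmonoid.eq_top_iff']
      intro a
      have ha : a = ∑ i, Pi.single i (a i) := (Finset.univ_sum_single a).symm
      rw [ha]
      refine AddSubmonoid.sum_mem _ (fun i _ => ?_)
      have : Pi.single i (a i) = a i • (Pi.single i 1 : Fin r → ℕ) := by
        funext k
        by_cases hk : k = i
        · subst hk; simp
        · simp [Pi.single_eq_of_ne hk]
      rw [this]
      exact AddSubmonoid.nsmul_mem _
        (AddSubmonoid.subset_closure
          (Finset.mem_coe.mpr (Finset.mem_image_of_mem _ (Finset.mem_univ i)))) _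
    · intro i
      exact Finset.sum_nonneg fun k _ => hl k
  · rintro ⟨⟨S, hcard, hS⟩, herase⟩
    have hl : ∀ k, 0 ≤ ℓ k := by
      by_contra hneg
      push_neg at hneg
      obtain ⟨j₀, hj₀⟩ := hneg
      obtain ⟨i₀, hi₀⟩ := hpos ⟨j₀, hj₀⟩
      set P := Finset.univ.filter (fun k => 0 ≤ ℓ k) with hP
      set Pp := Finset.univ.filter (fun k => 0 < ℓ k) with hPp
      set N := Finset.univ.filter (fun k => ℓ k < 0) with hN
      have hPN : P.card + N.card = r := by
        have h := Finset.card_filter_add_card_filter_not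
          (s := (Finset.univ : Finset (Fin r))) (p := fun k => 0 ≤ ℓ k)
        simpa [P, N, not_le, Finset.card_univ] using h
      have hPp2 : 2 ≤ Pp.card := by
        by_contra hle
        push_neg at hle
        have hone : ∀ k, 0 < ℓ k → k = i₀ := by
          intro k hk
          have hk' : k ∈ Pp := by simp [Pp, hk]
          have hi' : i₀ ∈ Pp := by simp [Pp, hi₀]
          exact Finset.card_le_one.mp (by omega) k hk' i₀ hi'
        have hji : j₀ ≠ i₀ := by
          intro h; rw [h] at hj₀; omega
        have hlt : ∑ j ∈ Finset.univ.erase i₀, ℓ j < 0 := by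
          have h := Finset.sum_lt_sum (s := Finset.univ.erase i₀) (f := ℓ)
            (g := fun _ => (0 : ℤ)) ?_ ?_
          · simpa using h
          · intro k hk
            rcases lt_or_ge 0 (ℓ k) with h' | h'
            · exact absurd (hone k h') (Finset.ne_of_mem_erase hk)
            · exact h'
          · exact ⟨j₀, Finset.mem_erase.mpr ⟨hji, Finset.mem_univ _⟩, hj₀⟩
        exact absurd (herase i₀) (not_le.mpr hlt)
      -- the minimal multiplier
      set nf : Fin r → Fin r → ℕ :=
        fun i j => sInf {n : ℕ | 0 ≤ (n : ℤ) * ℓ i + ℓ j} with hnfdef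
      have hex : ∀ i j, 0 < ℓ i → ℓ j < 0 →
          {n : ℕ | 0 ≤ (n : ℤ) * ℓ i + ℓ j}.Nonempty := by
        intro i j hi hj
        refine ⟨(-ℓ j).toNat, ?_⟩
        have h1 : (((-ℓ j).toNat : ℕ) : ℤ) = -ℓ j := Int.toNat_of_nonneg (by omega)
        simp only [Set.mem_setOf_eq, h1]
        have h2 : 1 ≤ ℓ i := hi
        nlinarith
      have hnf_spec : ∀ i j, 0 < ℓ i → ℓ j < 0 →
          0 ≤ (nf i j : ℤ) * ℓ i + ℓ j := by
        intro i j hi hj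
        exact Nat.sInf_mem (hex i j hi hj)
      have hnf_min : ∀ i j (m : ℕ), 0 ≤ (m : ℤ) * ℓ i + ℓ j → nf i j ≤ m := by
        intro i j m hm
        exact Nat.sInf_le hm
      have hnf_pos : ∀ i j, 0 < ℓ i → ℓ j < 0 → 1 ≤ nf i j := by
        intro i j hi hj
        by_contra h
        push_neg at h
        have h0 : nf i j = 0 := by omega
        have := hnf_spec i j hi hj
        rw [h0] at this
        simp at this
        omega
      -- the candidate irreducible elements
      set F : Fin r × Fin r → (Fin r → ℕ) :=
        fun p => Pi.single p.1 (nf p.1 p.2) + Pi.single p.2 1 with hFdef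
      have hFval : ∀ i j : Fin r, i ≠ j →
          (F (i, j) i = nf i j ∧ F (i, j) j = 1 ∧
            ∀ k, k ≠ i → k ≠ j → F (i, j) k = 0) := by
        intro i j hij
        refine ⟨?_, ?_, ?_⟩
        · simp [F, Pi.single_eq_of_ne hij]
        · simp [F, Pi.single_eq_of_ne (Ne.symm hij)]
        · intro k hki hkj
          simp [F, Pi.single_eq_of_ne hki, Pi.single_eq_of_ne hkj]
      have hFirr : ∀ i j, 0 < ℓ i → ℓ j < 0 → ∀ a b : Fin r → ℕ,
          a ∈ Hmono r ℓ → b ∈ Hmono r ℓ → F (i, j) = a + b → a = 0 ∨ b = 0 := by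
        intro i j hi hj a b ha hb hab
        have hij : i ≠ j := by intro h; rw [h] at hi; omega
        obtain ⟨hFi, hFj, hFk⟩ := hFval i j hij
        have hk0 : ∀ k, k ≠ i → k ≠ j → a k = 0 ∧ b k = 0 := by
          intro k hki hkj
          have h := congrFun hab k
          rw [hFk k hki hkj] at h
          simp only [Pi.add_apply] at h
          omega
        have hj' : a j + b j = 1 := by
          have h := congrFun hab j
          rw [hFj] at h
          simpa using h.symm
        have hi' : a i + b i = nf i j := by
          have h := congrFun hab i
          rw [hFi] at h
          simpa using h.symm
        rcases (by omega : a j = 0 ∨ b j = 0) with h | h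
        · -- then b j = 1, b forces b i ≥ nf i j, so a i = 0, so a = 0
          have hbj : b j = 1 := by omega
          have hbsum : ∑ k, (b k : ℤ) * ℓ k = (b i : ℤ) * ℓ i + (b j : ℤ) * ℓ j :=
            sum_eq_pair b i j hij (fun k hki hkj => (hk0 k hki hkj).2)
          have hbH : 0 ≤ (b i : ℤ) * ℓ i + ℓ j := by
            have := (mem_Hmono).mp hb
            rw [hbsum, hbj] at this
            simpa using this
          have hbig : nf i j ≤ b i := hnf_min i j (b i) hbH
          have hai : a i = 0 := by omega
          left
          funext k
          by_cases hki : k = i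
          · subst hki; exact hai
          · by_cases hkj : k = j
            · subst hkj; exact h
            · exact (hk0 k hki hkj).1
        · have haj : a j = 1 := by omega
          have hasum : ∑ k, (a k : ℤ) * ℓ k = (a i : ℤ) * ℓ i + (a j : ℤ) * ℓ j :=
            sum_eq_pair a i j hij (fun k hki hkj => (hk0 k hki hkj).1)
          have haH : 0 ≤ (a i : ℤ) * ℓ i + ℓ j := by
            have := (mem_Hmono).mp ha
            rw [hasum, haj] at this
            simpa using this
          have hbig : nf i j ≤ a i := hnf_min i j (a i) haH
          have hbi : b i = 0 := by omega
          right
          funext k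
          by_cases hki : k = i
          · subst hki; exact hbi
          · by_cases hkj : k = j
            · subst hkj; exact h
            · exact (hk0 k hki hkj).2
      -- the two families of irreducibles
      set A := P.image (fun i => (Pi.single i 1 : Fin r → ℕ)) with hAdef
      set B := (Pp ×ˢ N).image F with hBdef
      have hmemPp : ∀ {k}, k ∈ Pp → 0 < ℓ k := by
        intro k hk; simpa [Pp] using hk
      have hmemN : ∀ {k}, k ∈ N → ℓ k < 0 := by
        intro k hk; simpa [N] using hk
      have hAS : A ⊆ S := by
        intro x hx
        obtain ⟨i, hiP, rfl⟩ := Finset.mem_image.mp hx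
        have hli : 0 ≤ ℓ i := by simpa [P] using hiP
        refine mem_S_of_irreducible S hS _ ?_ ?_ ?_
        · rw [mem_Hmono, sum_single_mul]; simpa using hli
        · intro h
          have := congrFun h i
          simp at this
        · intro a b _ _ hab
          exact single_irreducible i a b hab
      have hBS : B ⊆ S := by
        intro x hx
        obtain ⟨p, hp, rfl⟩ := Finset.mem_image.mp hx
        obtain ⟨hp1, hp2⟩ := Finset.mem_product.mp hp
        have hi : 0 < ℓ p.1 := hmemPp hp1
        have hj : ℓ p.2 < 0 := hmemN hp2
        have hij : p.1 ≠ p.2 := by intro h; rw [h] at hi; omega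
        obtain ⟨hFi, hFj, hFk⟩ := hFval p.1 p.2 hij
        refine mem_S_of_irreducible S hS _ ?_ ?_ ?_
        · rw [mem_Hmono]
          rw [sum_eq_pair (F (p.1, p.2)) p.1 p.2 hij hFk, hFi, hFj]
          have := hnf_spec p.1 p.2 hi hj
          push_cast
          linarith
        · intro h
          have := congrFun h p.2
          rw [hFj] at this
          simp at this
        · intro a b ha hb hab
          exact hFirr p.1 p.2 hi hj a b ha hb hab
      have hcardA : A.card = P.card :=
        Finset.card_image_of_injective _ single_one_injective
      have hcardB : B.card = Pp.card * N.card := by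
        rw [hBdef, Finset.card_image_of_injOn, Finset.card_product]
        intro p hp q hq hpq
        simp only [Finset.coe_product, Set.mem_prod, Finset.mem_coe] at hp hq
        have hip : 0 < ℓ p.1 := hmemPp hp.1
        have hjp : ℓ p.2 < 0 := hmemN hp.2
        have hiq : 0 < ℓ q.1 := hmemPp hq.1
        have hjq : ℓ q.2 < 0 := hmemN hq.2
        have hijp : p.1 ≠ p.2 := by intro h; rw [h] at hip; omega
        have hijq : q.1 ≠ q.2 := by intro h; rw [h] at hiq; omega
        obtain ⟨hFpi, hFpj, hFpk⟩ := hFval p.1 p.2 hijp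
        obtain ⟨hFqi, hFqj, hFqk⟩ := hFval q.1 q.2 hijq
        have hp' : F (p.1, p.2) = F (q.1, q.2) := by
          simpa using hpq
        have hj2 : q.2 = p.2 := by
          by_contra hne
          have hq2p1 : q.2 ≠ p.1 := by intro h; rw [h] at hjq; omega
          have h := congrFun hp' q.2
          rw [hFpk q.2 hq2p1 hne, hFqj] at h
          omega
        have hj1 : q.1 = p.1 := by
          by_contra hne
          have hq1p2 : q.1 ≠ p.2 := by intro h; rw [h] at hiq; omega
          have h := congrFun hp' q.1
          rw [hFpk q.1 hne hq1p2, hFqi] at h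
          have := hnf_pos q.1 q.2 hiq hjq
          omega
        exact Prod.ext hj1.symm hj2.symm
      have hdisj : Disjoint A B := by
        rw [Finset.disjoint_left]
        intro x hxA hxB
        obtain ⟨i, hiP, rfl⟩ := Finset.mem_image.mp hxA
        obtain ⟨p, hp, hEq⟩ := Finset.mem_image.mp hxB
        obtain ⟨hp1, hp2⟩ := Finset.mem_product.mp hp
        have hip : 0 < ℓ p.1 := hmemPp hp1
        have hjp : ℓ p.2 < 0 := hmemN hp2
        have hijp : p.1 ≠ p.2 := by intro h; rw [h] at hip; omega
        obtain ⟨hFi, hFj, hFk⟩ := hFval p.1 p.2 hijp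
        have hFp : F p = F (p.1, p.2) := by rfl
        rw [hFp] at hEq
        have h2 : i = p.2 := by
          by_contra hne
          have h := congrFun hEq p.2
          rw [hFj, Pi.single_eq_of_ne (Ne.symm hne)] at h
          omega
        have h := congrFun hEq p.1
        rw [hFi, h2, Pi.single_eq_of_ne hijp] at h
        have := hnf_pos p.1 p.2 hip hjp
        omega
      have hsub : A ∪ B ⊆ S := Finset.union_subset hAS hBS
      have hle : (A ∪ B).card ≤ S.card := Finset.card_le_card hsub
      rw [Finset.card_union_of_disjoint hdisj, hcardA, hcardB, hcard] at hle
      have hN1 : 1 ≤ N.card := by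
        refine Finset.card_pos.mpr ⟨j₀, ?_⟩
        simp [N, hj₀]
      have h2N : 2 * N.card ≤ Pp.card * N.card := Nat.mul_le_mul_right _ hPp2
      omega
    rw [AddSubmonoid.eq_top_iff']
    intro a
    rw [mem_Hmono]
    exact Finset.sum_nonneg fun k _ =>
      mul_nonneg (Int.natCast_nonneg _) (hl k)
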